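/- arXiv:1401.4885 — 2 statements merged into one kernel-verified Lean document; each statement's English description precedes it below -/
import Mathlib

section
/- Let A be a Young function satisfying the Δ₂-condition. Then there is a constant c > 0 such that t·∫₀ᵗ Ã(s)/s² ds ≤ Ã(ct) for all t ≥ 0, where Ã is the Young conjugate of A; equivalently, condition (1.2) of the paper holds with B = A. -/
open MeasureTheory ENNReal NNReal Set Filter

/-- A Young function: a convex, left-continuous function `[0,∞] → [0,∞]` with `A 0 = 0`,
neither identically `0` nor identically `∞`. -/
structure YoungFunction where
  toFun : ℝ≥0∞ → ℝ≥0∞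
  map_zero : toFun 0 = 0
  convex' : ∀ (s t : ℝ≥0∞) (θ : ℝ≥0), θ ≤ 1 →
    toFun ((θ : ℝ≥0∞) * s + ((1 - θ : ℝ≥0) : ℝ≥0∞) * t) ≤
      (θ : ℝ≥0∞) * toFun s + ((1 - θ : ℝ≥0) : ℝ≥0∞) * toFun t
  leftCont : ∀ s : ℝ≥0∞, ContinuousWithinAt toFun (Set.Iio s) s
  exists_ne_zero : ∃ s, toFun s ≠ 0
  exists_ne_top : ∃ s, 0 < s ∧ toFun s ≠ ∞

/-- The generalized right-continuous inverse of a Young function. -/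
noncomputable def genInv (A : ℝ≥0∞ → ℝ≥0∞) (r : ℝ≥0∞) : ℝ≥0∞ :=
  sInf {s : ℝ≥0∞ | r < A s}

/-- The Young conjugate `Ã(s) = sup {r s − A(r) : r ≥ 0}`. -/
noncomputable def youngConj (A : ℝ≥0∞ → ℝ≥0∞) (s : ℝ≥0∞) : ℝ≥0∞ :=
  ⨆ r : ℝ≥0, ((r : ℝ≥0∞) * s - A r)

/-- The Luxemburg norm associated with a Young function. -/
noncomputable def luxNorm {α : Type*} [MeasurableSpace α] (A : ℝ≥0∞ → ℝ≥0∞)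
    (μ : Measure α) (f : α → ℝ≥0∞) : ℝ≥0∞ :=
  sInf {l : ℝ≥0∞ | 0 < l ∧ ∫⁻ x, A (f x / l) ∂μ ≤ 1}

lemma youngConj_mono' (A : ℝ≥0∞ → ℝ≥0∞) : Monotone (youngConj A) := fun u v huv =>
  iSup_mono fun r => tsub_le_tsub (mul_le_mul_right huv _) le_rfl

lemma youngConj_key (A : ℝ≥0∞ → ℝ≥0∞) (m : ℝ≥0) (v u : ℝ≥0∞)
    (hab : ∀ r : ℝ≥0, ∃ r' : ℝ≥0, (m : ℝ≥0∞) * (r * u) = (r' : ℝ≥0∞) * v ∧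
      A r' ≤ (m : ℝ≥0∞) * A r) :
    (m : ℝ≥0∞) * youngConj A u ≤ youngConj A v := by
  rw [youngConj, ENNReal.mul_iSup]
  refine iSup_le fun r => ?_
  obtain ⟨r', h1, h2⟩ := hab r
  calc (m : ℝ≥0∞) * ((r : ℝ≥0∞) * u - A r)
      = (m : ℝ≥0∞) * ((r : ℝ≥0∞) * u) - (m : ℝ≥0∞) * A r := by
        rw [ENNReal.mul_sub]; intro _ _; exact coe_ne_top
    _ ≤ (r' : ℝ≥0∞) * v - A r' := by rw [h1]; exact tsub_le_tsub le_rfl h2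
    _ ≤ youngConj A v := le_iSup (fun r : ℝ≥0 => (r : ℝ≥0∞) * v - A r) r'

lemma youngConj_scale (A : ℝ≥0∞ → ℝ≥0∞) (m : ℝ≥0) (hm : 1 ≤ m) (u : ℝ≥0∞) :
    (m : ℝ≥0∞) * youngConj A u ≤ youngConj A ((m : ℝ≥0∞) * u) :=
  youngConj_key A m _ u fun r => ⟨r, by ring,
    le_mul_of_one_le_left zero_le (by exact_mod_cast hm)⟩

/-- If `A` satisfies the `Δ₂`-condition, then condition (1.2) holds with `B = A`:
`t·∫₀ᵗ Ã(s)/s² ds ≤ Ã(ct)` for some `c > 0` and all `t ≥ 0`. -/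
theorem conj_hardy_condition_of_delta2 (A : YoungFunction) (C : ℝ)
    (h : ∀ s : ℝ≥0, A.toFun (2 * (s : ℝ≥0∞)) ≤ ENNReal.ofReal C * A.toFun s) :
    ∃ c : ℝ, 0 < c ∧ ∀ t : ℝ, 0 ≤ t →
      ENNReal.ofReal t *
          (∫⁻ s in Set.Ioc (0 : ℝ) t,
            youngConj A.toFun (ENNReal.ofReal s) / ENNReal.ofReal (s ^ 2)) ≤
        youngConj A.toFun (ENNReal.ofReal (c * t)) := by
  set Y := youngConj A.toFun with hY
  set a : ℝ≥0 := max C.toNNReal 2 with ha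
  have ha2 : (2 : ℝ≥0) ≤ a := le_max_right _ _
  have ha0 : (0 : ℝ) < (a : ℝ) := by
    have : (0:ℝ≥0) < a := lt_of_lt_of_le (by norm_num) ha2
    exact_mod_cast this
  have ha1 : (1 : ℝ) < (a : ℝ) := by
    have : (1:ℝ≥0) < a := lt_of_lt_of_le (by norm_num) ha2
    exact_mod_cast this
  -- Δ₂ with the NNReal constant 2*a
  have hD : ∀ s : ℝ≥0, A.toFun (2 * (s : ℝ≥0∞)) ≤ ((2 * a : ℝ≥0) : ℝ≥0∞) * A.toFun s := by
    intro s
    refine (h s).trans (mul_le_mul_left ?_ _)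
    rw [ENNReal.ofReal]
    exact_mod_cast le_trans (le_max_left C.toNNReal 2) (le_mul_of_one_le_left zero_le one_le_two)
  -- the ∇₂ condition for the conjugate
  have hkey : ∀ u : ℝ≥0∞, ((2 * a : ℝ≥0) : ℝ≥0∞) * Y u ≤ Y ((a : ℝ≥0∞) * u) := by
    intro u
    refine youngConj_key A.toFun (2 * a) _ u fun r => ⟨2 * r, by push_cast; ring, ?_⟩
    calc A.toFun (((2 * r : ℝ≥0) : ℝ≥0∞)) = A.toFun (2 * (r : ℝ≥0∞)) := by push_cast; ring_nf
      _ ≤ ((2 * a : ℝ≥0) : ℝ≥0∞) * A.toFun r := hD r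
  refine ⟨((2 * a ^ 2 : ℝ≥0) : ℝ), by positivity, ?_⟩
  intro t ht0
  rcases ht0.eq_or_lt with rfl | ht
  · simp
  set T := ENNReal.ofReal t with hT
  have hT0 : T ≠ 0 := by simpa [hT] using ht
  have hTtop : T ≠ ∞ := ofReal_ne_top
  -- iteration
  have hiter : ∀ n : ℕ, ((2 * a : ℝ≥0) : ℝ≥0∞) ^ n * Y (ENNReal.ofReal (t / (a:ℝ) ^ n)) ≤ Y T := by
    intro n
    induction n with
    | zero => simp [hT]
    | succ n ih =>
      have e : (a : ℝ≥0∞) * ENNReal.ofReal (t / (a:ℝ) ^ (n+1)) = ENNReal.ofReal (t / (a:ℝ) ^ n) := by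
        rw [← ENNReal.ofReal_coe_nnreal, ← ENNReal.ofReal_mul (by positivity)]
        congr 1
        field_simp
        ring
      calc ((2 * a : ℝ≥0) : ℝ≥0∞) ^ (n+1) * Y (ENNReal.ofReal (t / (a:ℝ) ^ (n+1)))
          = ((2 * a : ℝ≥0) : ℝ≥0∞) ^ n *
            (((2 * a : ℝ≥0) : ℝ≥0∞) * Y (ENNReal.ofReal (t / (a:ℝ) ^ (n+1)))) := by ring
        _ ≤ ((2 * a : ℝ≥0) : ℝ≥0∞) ^ n * Y ((a : ℝ≥0∞) * ENNReal.ofReal (t / (a:ℝ) ^ (n+1))) :=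
            mul_le_mul_right (hkey _) _
        _ = ((2 * a : ℝ≥0) : ℝ≥0∞) ^ n * Y (ENNReal.ofReal (t / (a:ℝ) ^ n)) := by rw [e]
        _ ≤ Y T := ih
  -- covering of (0, t]
  have hcover : Ioc (0:ℝ) t ⊆ ⋃ n : ℕ, Ioc (t / (a:ℝ) ^ (n+1)) (t / (a:ℝ) ^ n) := by
    intro s hs
    have hs0 : (0:ℝ) < s := hs.1
    have hst : s ≤ t := hs.2
    have hex : ∃ n : ℕ, t / (a:ℝ) ^ (n+1) < s := by
      obtain ⟨n, hn⟩ := pow_unbounded_of_one_lt (t / s) ha1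
      refine ⟨n, ?_⟩
      rw [div_lt_iff₀ (by positivity)]
      calc t < (a:ℝ) ^ n * s := by rwa [div_lt_iff₀ hs0] at hn
        _ ≤ (a:ℝ) ^ (n+1) * s :=
            mul_le_mul_of_nonneg_right (pow_le_pow_right₀ ha1.le (Nat.le_succ n)) hs0.le
        _ = s * (a:ℝ) ^ (n+1) := mul_comm _ _
    set N := Nat.find hex with hN
    refine mem_iUnion.2 ⟨N, Nat.find_spec hex, ?_⟩
    match hNm : N with
    | 0 => simpa using hst
    | (m+1) =>
      have := Nat.find_min hex (m := m) (by omega)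
      push_neg at this
      simpa using this
  -- per-piece bound
  have hpiece : ∀ n : ℕ,
      (∫⁻ s in Ioc (t / (a:ℝ) ^ (n+1)) (t / (a:ℝ) ^ n), Y (ENNReal.ofReal s) / ENNReal.ofReal (s ^ 2))
        ≤ ((a : ℝ≥0∞) ^ 2 * Y T / T) * (2⁻¹ : ℝ≥0∞) ^ n := by
    intro n
    set p := t / (a:ℝ) ^ (n+1) with hp
    set q := t / (a:ℝ) ^ n with hq
    have hp0 : 0 < p := by rw [hp]; positivity
    have hq0 : 0 < q := by rw [hq]; positivity
    have hBn : ∀ s ∈ Ioc p q, Y (ENNReal.ofReal s) / ENNReal.ofReal (s ^ 2)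
        ≤ Y (ENNReal.ofReal q) * ENNReal.ofReal (1 / p ^ 2) := by
      intro s hs
      rw [div_eq_mul_inv]
      refine mul_le_mul' (youngConj_mono' _ (ofReal_le_ofReal hs.2)) ?_
      have hsp : 0 < s := hp0.trans hs.1
      rw [one_div, ← ofReal_inv_of_pos (by positivity)]
      apply ofReal_le_ofReal
      rw [inv_le_inv₀ (by positivity) (by positivity)]
      exact pow_le_pow_left₀ hp0.le hs.1.le 2
    calc (∫⁻ s in Ioc p q, Y (ENNReal.ofReal s) / ENNReal.ofReal (s ^ 2))
        ≤ ∫⁻ _ in Ioc p q, Y (ENNReal.ofReal q) * ENNReal.ofReal (1 / p ^ 2) :=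
          setLIntegral_mono measurable_const hBn
      _ = Y (ENNReal.ofReal q) * ENNReal.ofReal (1 / p ^ 2) * volume (Ioc p q) :=
          setLIntegral_const _ _
      _ = Y (ENNReal.ofReal q) * (ENNReal.ofReal (1 / p ^ 2) * ENNReal.ofReal (q - p)) := by
          rw [Real.volume_Ioc, mul_assoc]
      _ ≤ Y (ENNReal.ofReal q) * ENNReal.ofReal ((1 / p ^ 2) * q) := by
          rw [← ENNReal.ofReal_mul (by positivity)]
          exact mul_le_mul' le_rfl (ofReal_le_ofReal
            (mul_le_mul_of_nonneg_left (by linarith [hp0]) (by positivity)))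
      _ = Y (ENNReal.ofReal q) * ENNReal.ofReal ((a:ℝ) ^ (n+2) / t) := by
          congr 1
          rw [hp, hq]
          congr 1
          have := ha0.ne'
          have := ht.ne'
          field_simp
          ring
      _ ≤ ((a : ℝ≥0∞) ^ 2 * Y T / T) * (2⁻¹ : ℝ≥0∞) ^ n := by
          have e2 : ENNReal.ofReal ((a:ℝ) ^ (n+2) / t) = (a : ℝ≥0∞) ^ (n+2) / T := by
            rw [ENNReal.ofReal_div_of_pos ht, ENNReal.ofReal_pow ha0.le,
              ENNReal.ofReal_coe_nnreal, hT]
          have e3 : ((a : ℝ≥0∞) ^ 2 * Y T / T) * (2⁻¹ : ℝ≥0∞) ^ n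
              = ((a : ℝ≥0∞) ^ 2 * Y T * (2⁻¹ : ℝ≥0∞) ^ n) / T := by
            simp only [div_eq_mul_inv]; ring
          rw [e2, e3, ← mul_div_assoc]
          refine ENNReal.div_le_div_right ?_ T
          have h21 : (2 : ℝ≥0∞) ^ n * (2⁻¹ : ℝ≥0∞) ^ n = 1 := by
            rw [← mul_pow, ENNReal.mul_inv_cancel two_ne_zero ofNat_ne_top, one_pow]
          have e5 : (a : ℝ≥0∞) ^ 2 * (((2 * a : ℝ≥0) : ℝ≥0∞) ^ n * Y (ENNReal.ofReal q))
              * (2⁻¹ : ℝ≥0∞) ^ n = Y (ENNReal.ofReal q) * (a : ℝ≥0∞) ^ (n + 2) := by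
            push_cast
            calc (a : ℝ≥0∞) ^ 2 * (((2 : ℝ≥0∞) * (a : ℝ≥0∞)) ^ n * Y (ENNReal.ofReal q))
                * (2⁻¹ : ℝ≥0∞) ^ n
                = Y (ENNReal.ofReal q) * (a : ℝ≥0∞) ^ (n + 2)
                  * ((2 : ℝ≥0∞) ^ n * (2⁻¹ : ℝ≥0∞) ^ n) := by rw [mul_pow]; ring
              _ = Y (ENNReal.ofReal q) * (a : ℝ≥0∞) ^ (n + 2) := by rw [h21, mul_one]
          calc Y (ENNReal.ofReal q) * (a : ℝ≥0∞) ^ (n + 2)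
              = (a : ℝ≥0∞) ^ 2 * (((2 * a : ℝ≥0) : ℝ≥0∞) ^ n * Y (ENNReal.ofReal q))
                * (2⁻¹ : ℝ≥0∞) ^ n := e5.symm
            _ ≤ (a : ℝ≥0∞) ^ 2 * Y T * (2⁻¹ : ℝ≥0∞) ^ n := by
                exact mul_le_mul_left (mul_le_mul_right (hiter n) _) _
  -- put everything together
  calc T * (∫⁻ s in Ioc (0:ℝ) t, Y (ENNReal.ofReal s) / ENNReal.ofReal (s ^ 2))
      ≤ T * (∫⁻ s in ⋃ n : ℕ, Ioc (t / (a:ℝ) ^ (n+1)) (t / (a:ℝ) ^ n),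
          Y (ENNReal.ofReal s) / ENNReal.ofReal (s ^ 2)) :=
        mul_le_mul_right (lintegral_mono_set hcover) _
    _ ≤ T * ∑' n : ℕ, (∫⁻ s in Ioc (t / (a:ℝ) ^ (n+1)) (t / (a:ℝ) ^ n),
          Y (ENNReal.ofReal s) / ENNReal.ofReal (s ^ 2)) :=
        mul_le_mul_right (lintegral_iUnion_le _ _) _
    _ ≤ T * ∑' n : ℕ, ((a : ℝ≥0∞) ^ 2 * Y T / T) * (2⁻¹ : ℝ≥0∞) ^ n :=
        mul_le_mul_right (ENNReal.tsum_le_tsum hpiece) _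
    _ = T * (((a : ℝ≥0∞) ^ 2 * Y T / T) * 2) := by
        rw [ENNReal.tsum_mul_left, ENNReal.tsum_geometric]
        norm_num
    _ = ((2 * a ^ 2 : ℝ≥0) : ℝ≥0∞) * Y T := by
        have e4 : T * (((a : ℝ≥0∞) ^ 2 * Y T / T) * 2)
            = ((a : ℝ≥0∞) ^ 2 * Y T / T * T) * 2 := by
          simp only [div_eq_mul_inv]; ring
        rw [e4, ENNReal.div_mul_cancel hT0 hTtop]
        push_cast
        ring
    _ ≤ Y (((2 * a ^ 2 : ℝ≥0) : ℝ≥0∞) * T) :=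
        youngConj_scale _ _ (by
          have h1a : (1:ℝ≥0) ≤ a := one_le_two.trans ha2
          calc (1:ℝ≥0) = 1 * 1 ^ 2 := by norm_num
            _ ≤ 2 * a ^ 2 := mul_le_mul' one_le_two (pow_le_pow_left₀ zero_le h1a 2)) _
    _ = Y (ENNReal.ofReal (((2 * a ^ 2 : ℝ≥0) : ℝ) * t)) := by
        rw [ENNReal.ofReal_mul (by positivity), ENNReal.ofReal_coe_nnreal, hT]
end

section
/- (Decomposition norm bound) Let Ω ⊂ ℝⁿ have finite positive measure, A a Young function, Ω_i ⊂ Ω and G_i ⊂ Ω measurable with |Ω_i ∩ G_i| > 0, and let g ∈ L^A(Ω). Define f(x) = g(x) − (χ_{Ω_i∩G_i}(x)/|Ω_i∩G_i|)·∫_{Ω_i} g dy for x ∈ Ω_i and f = 0 elsewhere. Then ‖f‖_{L^A(Ω)} ≤ (1 + 4|Ω_i|/|Ω_i∩G_i|)·‖g‖_{L^A(Ω)}. -/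
open MeasureTheory ENNReal NNReal Set Filter Topology

namespace YFAux

/-- `A (θ s) ≤ θ A s` for `θ ≤ 1`. -/
lemma mul_le (A : YoungFunction) {θ : ℝ≥0} (hθ : θ ≤ 1) (s : ℝ≥0∞) :
    A.toFun ((θ : ℝ≥0∞) * s) ≤ (θ : ℝ≥0∞) * A.toFun s := by
  have h := A.convex' s 0 θ hθ
  simpa [A.map_zero] using h

/-- Monotone on finite right endpoints. -/
lemma mono_fin (A : YoungFunction) {s t : ℝ≥0∞} (ht : t ≠ ⊤) (hst : s ≤ t) :
    A.toFun s ≤ A.toFun t := by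
  rcases eq_or_ne t 0 with rfl | ht0
  · have : s = 0 := le_antisymm hst zero_le
    simp [this]
  · have hs : s ≠ ⊤ := fun h => ht (top_le_iff.mp (h ▸ hst))
    have hdiv1 : s / t ≤ 1 := ENNReal.div_le_of_le_mul' (by simpa using hst)
    have hdivt : s / t ≠ ⊤ := (ENNReal.div_lt_top hs ht0).ne
    set θ : ℝ≥0 := (s / t).toNNReal with hθdef
    have hθc : (θ : ℝ≥0∞) = s / t := ENNReal.coe_toNNReal hdivt
    have hθ1 : θ ≤ 1 := ENNReal.coe_le_one_iff.mp (hθc ▸ hdiv1)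
    have hmul : (θ : ℝ≥0∞) * t = s := by
      rw [hθc, ENNReal.div_mul_cancel ht0 ht]
    calc A.toFun s = A.toFun ((θ : ℝ≥0∞) * t) := by rw [hmul]
      _ ≤ (θ : ℝ≥0∞) * A.toFun t := mul_le A hθ1 t
      _ ≤ 1 * A.toFun t := by
          gcongr
          exact_mod_cast hθ1
      _ = A.toFun t := one_mul _

lemma mono (A : YoungFunction) : Monotone A.toFun := by
  intro s t hst
  rcases eq_or_ne t ⊤ with rfl | ht
  · rcases eq_or_ne s ⊤ with rfl | hs
    · exact le_rfl
    · haveI : (𝓝[<] (⊤ : ℝ≥0∞)).NeBot :=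
        nhdsWithin_Iio_self_neBot' ⟨0, by simp⟩
      have hc : Tendsto A.toFun (𝓝[<] (⊤ : ℝ≥0∞)) (𝓝 (A.toFun ⊤)) := A.leftCont ⊤
      refine ge_of_tendsto hc ?_
      have h1 : Ioi s ∈ 𝓝[<] (⊤ : ℝ≥0∞) :=
        mem_nhdsWithin_of_mem_nhds (Ioi_mem_nhds (lt_top_iff_ne_top.2 hs))
      filter_upwards [h1, self_mem_nhdsWithin] with t' h1' h2'
      exact mono_fin A (ne_of_lt (mem_Iio.mp h2')) (le_of_lt (mem_Ioi.mp h1'))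
  · exact mono_fin A ht hst

lemma measurable (A : YoungFunction) : Measurable A.toFun := (mono A).measurable

/-- There is a finite point where `A` is nonzero. -/
lemma exists_fin_ne_zero (A : YoungFunction) : ∃ s, s ≠ ⊤ ∧ A.toFun s ≠ 0 := by
  by_contra h
  push_neg at h
  obtain ⟨s0, hs0⟩ := A.exists_ne_zero
  have hs0top : s0 = ⊤ := by
    by_contra h'
    exact hs0 (h s0 h')
  subst hs0top
  haveI : (𝓝[<] (⊤ : ℝ≥0∞)).NeBot := nhdsWithin_Iio_self_neBot' ⟨0, by simp⟩
  have hc : Tendsto A.toFun (𝓝[<] (⊤ : ℝ≥0∞)) (𝓝 (A.toFun ⊤)) := A.leftCont ⊤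
  have hz : Tendsto A.toFun (𝓝[<] (⊤ : ℝ≥0∞)) (𝓝 0) := by
    refine Tendsto.congr' ?_ tendsto_const_nhds
    filter_upwards [self_mem_nhdsWithin] with t' ht'
    exact (h t' (ne_of_lt ht')).symm
  exact hs0 (tendsto_nhds_unique hc hz)

/-- `A` is unbounded: above any finite `r` there is a finite point where `A` exceeds `r`. -/
lemma exists_gt (A : YoungFunction) {r : ℝ≥0∞} (hr : r ≠ ⊤) :
    ∃ t, t ≠ ⊤ ∧ r < A.toFun t := by
  obtain ⟨s0, hs0t, hs0⟩ := exists_fin_ne_zero A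
  rcases eq_or_ne (A.toFun s0) ⊤ with htop | hfin
  · exact ⟨s0, hs0t, htop ▸ lt_top_iff_ne_top.2 hr⟩
  · set M := A.toFun s0 with hM
    have hM0 : M ≠ 0 := hs0
    set k : ℝ≥0 := (r / M).toNNReal + 1 with hk
    have hk0 : k ≠ 0 := by positivity
    have hk1 : 1 ≤ k := le_add_self
    have hkc : (k : ℝ≥0∞) = r / M + 1 := by
      rw [hk]
      push_cast
      rw [ENNReal.coe_toNNReal (ENNReal.div_lt_top hr hM0).ne]
    have hrk : r < (k : ℝ≥0∞) * M := by
      have h1 : r / M < (k : ℝ≥0∞) := by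
        rw [hkc]
        exact ENNReal.lt_add_right (ENNReal.div_lt_top hr hM0).ne one_ne_zero
      exact (ENNReal.div_lt_iff (Or.inl hM0) (Or.inl hfin)).mp h1
    have hkA : (k : ℝ≥0∞) * M ≤ A.toFun ((k : ℝ≥0∞) * s0) := by
      have hinv : (k⁻¹ : ℝ≥0) ≤ 1 := inv_le_one_of_one_le₀ hk1
      have h2 := mul_le A hinv ((k : ℝ≥0∞) * s0)
      have h3 : ((k⁻¹ : ℝ≥0) : ℝ≥0∞) * ((k : ℝ≥0∞) * s0) = s0 := by
        rw [← mul_assoc, ENNReal.coe_inv hk0,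
          ENNReal.inv_mul_cancel (by exact_mod_cast hk0) ENNReal.coe_ne_top, one_mul]
      rw [h3] at h2
      calc (k : ℝ≥0∞) * M
          ≤ (k : ℝ≥0∞) * (((k⁻¹ : ℝ≥0) : ℝ≥0∞) * A.toFun ((k : ℝ≥0∞) * s0)) :=
            mul_le_mul_right h2 _
        _ = A.toFun ((k : ℝ≥0∞) * s0) := by
            rw [← mul_assoc, ENNReal.coe_inv hk0,
              ENNReal.mul_inv_cancel (by exact_mod_cast hk0) ENNReal.coe_ne_top, one_mul]
    exact ⟨(k : ℝ≥0∞) * s0, ENNReal.mul_ne_top ENNReal.coe_ne_top hs0t,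
      lt_of_lt_of_le hrk hkA⟩

lemma apply_top (A : YoungFunction) : A.toFun ⊤ = ⊤ := by
  by_contra h
  obtain ⟨t, _, ht⟩ := exists_gt A h
  exact absurd (mono A (le_top : t ≤ ⊤)) (not_le.mpr ht)

/-- Convexity slope estimate: `(u/c) * A c ≤ A u` for `0 < c ≤ u`, `c` finite. -/
lemma slope (A : YoungFunction) {c u : ℝ≥0∞} (hc0 : c ≠ 0) (hct : c ≠ ⊤) (hcu : c ≤ u) :
    u / c * A.toFun c ≤ A.toFun u := by
  rcases eq_or_ne u ⊤ with rfl | hut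
  · rw [apply_top]; exact le_top
  · have hu0 : u ≠ 0 := fun h => hc0 (le_antisymm (h ▸ hcu) zero_le)
    have hdivt : c / u ≠ ⊤ := (ENNReal.div_lt_top hct hu0).ne
    set θ : ℝ≥0 := (c / u).toNNReal with hθdef
    have hθc : (θ : ℝ≥0∞) = c / u := ENNReal.coe_toNNReal hdivt
    have hθ1 : θ ≤ 1 := by
      have h1 : c / u ≤ 1 := ENNReal.div_le_of_le_mul' (by simpa using hcu)
      exact ENNReal.coe_le_one_iff.mp (hθc ▸ h1)
    have hmul : (θ : ℝ≥0∞) * u = c := by rw [hθc, ENNReal.div_mul_cancel hu0 hut]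
    have h2 : A.toFun c ≤ (c / u) * A.toFun u := by
      have := mul_le A hθ1 u
      rw [hmul, hθc] at this
      exact this
    calc u / c * A.toFun c ≤ u / c * ((c / u) * A.toFun u) := mul_le_mul_right h2 _
      _ = (u / c * (c / u)) * A.toFun u := by rw [mul_assoc]
      _ = 1 * A.toFun u := by
          congr 1
          rw [div_eq_mul_inv, div_eq_mul_inv]
          calc u * c⁻¹ * (c * u⁻¹) = (c * c⁻¹) * (u * u⁻¹) := by ring
            _ = 1 := by
                rw [ENNReal.mul_inv_cancel hc0 hct, ENNReal.mul_inv_cancel hu0 hut, one_mul]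
      _ = A.toFun u := one_mul _

section genInv

variable (A : YoungFunction) {r : ℝ≥0∞}

lemma le_of_lt_genInv {s : ℝ≥0∞} (hs : s < genInv A.toFun r) : A.toFun s ≤ r := by
  by_contra h
  exact absurd (sInf_le (show s ∈ {s | r < A.toFun s} from not_le.mp h)) (not_le.mpr hs)

lemma lt_of_genInv_lt {u : ℝ≥0∞} (hu : genInv A.toFun r < u) : r < A.toFun u := by
  obtain ⟨s, hs, hsu⟩ := sInf_lt_iff.mp hu
  exact lt_of_lt_of_le hs (mono A hsu.le)

lemma genInv_lt_top (hr : r ≠ ⊤) : genInv A.toFun r < ⊤ := by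
  obtain ⟨t, htt, ht⟩ := exists_gt A hr
  exact lt_of_le_of_lt (sInf_le ht) (lt_top_iff_ne_top.2 htt)

lemma genInv_pos (hr0 : r ≠ 0) : 0 < genInv A.toFun r := by
  obtain ⟨s1, hs1pos, hs1⟩ := A.exists_ne_top
  have hs1t : s1 ≠ ⊤ := fun h => hs1 (h ▸ apply_top A)
  have hex : ∃ s, s ≠ 0 ∧ A.toFun s ≤ r := by
    rcases le_or_gt (A.toFun s1) r with hle | hlt
    · exact ⟨s1, hs1pos.ne', hle⟩
    · have hM0 : A.toFun s1 ≠ 0 := fun h => (not_lt.mpr (zero_le (a := r))) (h ▸ hlt)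
      have hrt : r ≠ ⊤ := fun h => hs1 (top_le_iff.mp (h ▸ hlt.le))
      set θ : ℝ≥0 := (r / A.toFun s1).toNNReal ⊓ 1 with hθdef
      have hθpos : 0 < θ :=
        lt_min (ENNReal.toNNReal_pos (ENNReal.div_pos hr0 hs1).ne'
          (ENNReal.div_lt_top hrt hM0).ne) one_pos
      have hθ1 : θ ≤ 1 := min_le_right _ _
      have hθle : (θ : ℝ≥0∞) ≤ r / A.toFun s1 := by
        refine le_trans (ENNReal.coe_le_coe.mpr (min_le_left _ _)) ?_
        rw [ENNReal.coe_toNNReal (ENNReal.div_lt_top hrt hM0).ne]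
      refine ⟨(θ : ℝ≥0∞) * s1, ?_, ?_⟩
      · exact mul_ne_zero (by exact_mod_cast hθpos.ne') hs1pos.ne'
      · calc A.toFun ((θ : ℝ≥0∞) * s1) ≤ (θ : ℝ≥0∞) * A.toFun s1 := mul_le A hθ1 s1
          _ ≤ (r / A.toFun s1) * A.toFun s1 := mul_le_mul_left hθle _
          _ ≤ r := by rw [mul_comm]; exact ENNReal.mul_div_le
  obtain ⟨s, hs0, hsr⟩ := hex
  have hle : s ≤ genInv A.toFun r := by
    refine le_sInf fun x hx => ?_
    by_contra hxs
    exact absurd (le_trans (mono A (not_le.mp hxs).le) hsr) (not_le.mpr hx)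
  exact lt_of_lt_of_le (pos_iff_ne_zero.mpr hs0) hle

end genInv

end YFAux

namespace YFAux

lemma cancel_div (u c d : ℝ≥0∞) (hc0 : c ≠ 0) (hct : c ≠ ⊤) :
    c / d * (u / c) = u / d := by
  rw [div_eq_mul_inv, div_eq_mul_inv, div_eq_mul_inv]
  calc c * d⁻¹ * (u * c⁻¹) = (c * c⁻¹) * (u * d⁻¹) := by ring
    _ = u * d⁻¹ := by rw [ENNReal.mul_inv_cancel hc0 hct, one_mul]

/-- Key pointwise inequality replacing Hölder: `u ≤ 2β + 2βω·A(u)`. -/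
lemma ptwise (A : YoungFunction) {β ω : ℝ≥0∞} (hβ0 : β ≠ 0) (hβt : β ≠ ⊤)
    (hω0 : ω ≠ 0) (hωt : ω ≠ ⊤) (hA2β : 1 / ω ≤ A.toFun (2 * β)) (u : ℝ≥0∞) :
    u ≤ 2 * β + 2 * β * ω * A.toFun u := by
  rcases le_or_gt u (2 * β) with h | h
  · exact le_trans h le_self_add
  · have h2β0 : (2 : ℝ≥0∞) * β ≠ 0 := by simp [hβ0]
    have h2βt : (2 : ℝ≥0∞) * β ≠ ⊤ := ENNReal.mul_ne_top (by simp) hβt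
    have hAu : u / (2 * β * ω) ≤ A.toFun u := by
      calc u / (2 * β * ω) = u / (2 * β) * (1 / ω) := by
            rw [div_eq_mul_inv, div_eq_mul_inv, one_div,
              ENNReal.mul_inv (Or.inl h2β0) (Or.inl h2βt), ← mul_assoc]
        _ ≤ u / (2 * β) * A.toFun (2 * β) := mul_le_mul_right hA2β _
        _ ≤ A.toFun u := slope A h2β0 h2βt h.le
    calc u = 2 * β * ω * (u / (2 * β * ω)) :=
          (ENNReal.mul_div_cancel' (by simp [hβ0, hω0]) (fun h => absurd h (ENNReal.mul_ne_top h2βt hωt))).symm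
      _ ≤ 2 * β * ω * A.toFun u := mul_le_mul_right hAu _
      _ ≤ 2 * β + 2 * β * ω * A.toFun u := le_add_self

variable {α : Type*} [MeasurableSpace α]

lemma luxNorm_mono (A : YoungFunction) (μ : Measure α) {f h : α → ℝ≥0∞}
    (hfh : ∀ x, f x ≤ h x) :
    luxNorm A.toFun μ f ≤ luxNorm A.toFun μ h := by
  refine sInf_le_sInf fun l hl => ⟨hl.1, le_trans (lintegral_mono fun x => ?_) hl.2⟩
  exact mono A (ENNReal.div_le_div_right (hfh x) l)

lemma luxNorm_le_of (A : YoungFunction) (μ : Measure α) {f : α → ℝ≥0∞} {l : ℝ≥0∞}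
    (h : ∀ l', l < l' → 0 < l' ∧ ∫⁻ x, A.toFun (f x / l') ∂μ ≤ 1) :
    luxNorm A.toFun μ f ≤ l := by
  refine ENNReal.le_of_forall_pos_le_add fun ε hε hl => ?_
  exact sInf_le (h (l + ε) (ENNReal.lt_add_right hl.ne (by exact_mod_cast hε.ne')))

/-- Triangle inequality for the Luxemburg norm (second summand measurable). -/
lemma luxNorm_add_le (A : YoungFunction) (μ : Measure α) {f h : α → ℝ≥0∞}
    (hh : Measurable h) :
    luxNorm A.toFun μ (fun x => f x + h x) ≤ luxNorm A.toFun μ f + luxNorm A.toFun μ h := by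
  set Nf := luxNorm A.toFun μ f with hNf
  set Nh := luxNorm A.toFun μ h with hNh
  rcases eq_or_ne Nf ⊤ with htop | hNft
  · rw [htop, top_add]; exact le_top
  rcases eq_or_ne Nh ⊤ with htop | hNht
  · rw [htop, add_top]; exact le_top
  refine ENNReal.le_of_forall_pos_le_add fun ε hε _ => ?_
  obtain ⟨l1, hl1S, hl1⟩ : ∃ l1 ∈ {l : ℝ≥0∞ | 0 < l ∧ ∫⁻ x, A.toFun (f x / l) ∂μ ≤ 1},
      l1 < Nf + (ε / 2 : ℝ≥0) := by
    refine sInf_lt_iff.mp ?_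
    exact ENNReal.lt_add_right hNft (by exact_mod_cast (half_pos hε).ne')
  obtain ⟨l2, hl2S, hl2⟩ : ∃ l2 ∈ {l : ℝ≥0∞ | 0 < l ∧ ∫⁻ x, A.toFun (h x / l) ∂μ ≤ 1},
      l2 < Nh + (ε / 2 : ℝ≥0) := by
    refine sInf_lt_iff.mp ?_
    exact ENNReal.lt_add_right hNht (by exact_mod_cast (half_pos hε).ne')
  have hl1t : l1 ≠ ⊤ := hl1.ne_top
  have hl2t : l2 ≠ ⊤ := hl2.ne_top
  set a := l1.toNNReal with hadef
  set b := l2.toNNReal with hbdef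
  have hl1eq : (a : ℝ≥0∞) = l1 := ENNReal.coe_toNNReal hl1t
  have hl2eq : (b : ℝ≥0∞) = l2 := ENNReal.coe_toNNReal hl2t
  have ha0 : a ≠ 0 := (ENNReal.toNNReal_pos hl1S.1.ne' hl1t).ne'
  have hb0 : b ≠ 0 := (ENNReal.toNNReal_pos hl2S.1.ne' hl2t).ne'
  have hab0 : a + b ≠ 0 := by positivity
  set θ : ℝ≥0 := a / (a + b) with hθdef
  have hθ1 : θ ≤ 1 := (div_le_one (by positivity)).mpr le_self_add
  have hθ' : ((1 - θ : ℝ≥0)) = b / (a + b) := by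
    refine (eq_tsub_of_add_eq ?_).symm
    rw [← add_div, add_comm b a, div_self hab0]
  have hθc : (θ : ℝ≥0∞) = l1 / (l1 + l2) := by
    rw [hθdef, ENNReal.coe_div hab0]
    push_cast
    rw [hl1eq, hl2eq]
  have hθ'c : ((1 - θ : ℝ≥0) : ℝ≥0∞) = l2 / (l1 + l2) := by
    rw [hθ', ENNReal.coe_div hab0]
    push_cast
    rw [hl1eq, hl2eq]
  have key : ∀ x, A.toFun ((f x + h x) / (l1 + l2)) ≤
      (θ : ℝ≥0∞) * A.toFun (f x / l1) + ((1 - θ : ℝ≥0) : ℝ≥0∞) * A.toFun (h x / l2) := by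
    intro x
    have hc := A.convex' (f x / l1) (h x / l2) θ hθ1
    have e1 : (θ : ℝ≥0∞) * (f x / l1) = f x / (l1 + l2) := by
      rw [hθc, cancel_div _ _ _ hl1S.1.ne' hl1t]
    have e2 : ((1 - θ : ℝ≥0) : ℝ≥0∞) * (h x / l2) = h x / (l1 + l2) := by
      rw [hθ'c, cancel_div _ _ _ hl2S.1.ne' hl2t]
    have e3 : (f x + h x) / (l1 + l2) =
        (θ : ℝ≥0∞) * (f x / l1) + ((1 - θ : ℝ≥0) : ℝ≥0∞) * (h x / l2) := by
      rw [e1, e2, ENNReal.div_add_div_same]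
    rw [e3]
    exact hc
  have hmeas2 : Measurable fun x => ((1 - θ : ℝ≥0) : ℝ≥0∞) * A.toFun (h x / l2) :=
    (((measurable A).comp (hh.div_const l2)).const_mul _)
  have hint : ∫⁻ x, A.toFun ((f x + h x) / (l1 + l2)) ∂μ ≤ 1 := by
    calc ∫⁻ x, A.toFun ((f x + h x) / (l1 + l2)) ∂μ
        ≤ ∫⁻ x, ((θ : ℝ≥0∞) * A.toFun (f x / l1) +
            ((1 - θ : ℝ≥0) : ℝ≥0∞) * A.toFun (h x / l2)) ∂μ := lintegral_mono key
      _ = ∫⁻ x, (θ : ℝ≥0∞) * A.toFun (f x / l1) ∂μ +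
            ∫⁻ x, ((1 - θ : ℝ≥0) : ℝ≥0∞) * A.toFun (h x / l2) ∂μ :=
          lintegral_add_right _ hmeas2
      _ = (θ : ℝ≥0∞) * ∫⁻ x, A.toFun (f x / l1) ∂μ +
            ((1 - θ : ℝ≥0) : ℝ≥0∞) * ∫⁻ x, A.toFun (h x / l2) ∂μ := by
          rw [lintegral_const_mul' _ _ ENNReal.coe_ne_top,
            lintegral_const_mul' _ _ ENNReal.coe_ne_top]
      _ ≤ (θ : ℝ≥0∞) * 1 + ((1 - θ : ℝ≥0) : ℝ≥0∞) * 1 :=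
          add_le_add (mul_le_mul_right hl1S.2 _) (mul_le_mul_right hl2S.2 _)
      _ = ((θ + (1 - θ) : ℝ≥0) : ℝ≥0∞) := by
          rw [mul_one, mul_one, ENNReal.coe_add]
      _ = 1 := by rw [add_tsub_cancel_of_le hθ1]; rfl
  have hle : luxNorm A.toFun μ (fun x => f x + h x) ≤ l1 + l2 :=
    sInf_le ⟨hl1S.1.trans_le le_self_add, hint⟩
  calc luxNorm A.toFun μ (fun x => f x + h x) ≤ l1 + l2 := hle
    _ ≤ (Nf + (ε / 2 : ℝ≥0)) + (Nh + (ε / 2 : ℝ≥0)) := add_le_add hl1.le hl2.le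
    _ = Nf + Nh + (((ε / 2 : ℝ≥0) : ℝ≥0∞) + ((ε / 2 : ℝ≥0) : ℝ≥0∞)) := by ring
    _ = Nf + Nh + (ε : ℝ≥0∞) := by rw [← ENNReal.coe_add, add_halves]

end YFAux

namespace YFAux

variable {α : Type*} [MeasurableSpace α]

lemma luxNorm_indicator_le (A : YoungFunction) (μ : Measure α) {E : Set α}
    (hE : MeasurableSet E) {c β ω : ℝ≥0∞} (hβ0 : β ≠ 0) (hβt : β ≠ ⊤)
    (hβA : ∀ s, s < β → A.toFun s ≤ 1 / ω) (hμE : μ E ≤ ω) :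
    luxNorm A.toFun μ (E.indicator fun _ => c) ≤ c / β := by
  refine luxNorm_le_of A μ fun l' hl' => ⟨lt_of_le_of_lt zero_le hl', ?_⟩
  have hl'0 : l' ≠ 0 := (lt_of_le_of_lt zero_le hl').ne'
  have hcl : c / l' < β := by
    rcases eq_or_ne l' ⊤ with rfl | hlt
    · simpa [ENNReal.div_top] using pos_iff_ne_zero.mpr hβ0
    · have h1 : c < l' * β := (ENNReal.div_lt_iff (Or.inl hβ0) (Or.inl hβt)).mp hl'
      exact (ENNReal.div_lt_iff (Or.inl hl'0) (Or.inl hlt)).mpr (by rwa [mul_comm] at h1)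
  have heq : ∀ x, A.toFun ((E.indicator (fun _ => c) x) / l') =
      E.indicator (fun _ => A.toFun (c / l')) x := by
    intro x
    by_cases hx : x ∈ E <;> simp [hx, A.map_zero, ENNReal.zero_div]
  calc ∫⁻ x, A.toFun ((E.indicator (fun _ => c) x) / l') ∂μ
      = ∫⁻ x, E.indicator (fun _ => A.toFun (c / l')) x ∂μ := by
        exact lintegral_congr heq
    _ = A.toFun (c / l') * μ E := by rw [lintegral_indicator hE, setLIntegral_const]
    _ ≤ (1 / ω) * ω := mul_le_mul' (hβA _ hcl) hμE
    _ ≤ 1 := by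
        rcases eq_or_ne ω 0 with rfl | hω0
        · simp
        rcases eq_or_ne ω ⊤ with rfl | hωt
        · simp
        rw [one_div, ENNReal.inv_mul_cancel hω0 hωt]

lemma lintegral_le_luxNorm (A : YoungFunction) {μ ν : Measure α} (hν : ν ≤ μ)
    {β ω : ℝ≥0∞} (hβ0 : β ≠ 0) (hβt : β ≠ ⊤) (hω0 : ω ≠ 0) (hωt : ω ≠ ⊤)
    (hA2β : 1 / ω ≤ A.toFun (2 * β)) (hνuniv : ν Set.univ ≤ ω) (f : α → ℝ≥0∞) :
    ∫⁻ x, f x ∂ν ≤ 4 * β * ω * luxNorm A.toFun μ f := by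
  set N := luxNorm A.toFun μ f with hN
  have hC0 : 4 * β * ω ≠ 0 := by simp [hβ0, hω0]
  have hCt : 4 * β * ω ≠ ⊤ := by
    exact ENNReal.mul_ne_top (ENNReal.mul_ne_top (by simp) hβt) hωt
  have h2βωt : 2 * β * ω ≠ ⊤ :=
    ENNReal.mul_ne_top (ENNReal.mul_ne_top (by simp) hβt) hωt
  suffices hsuf : (∫⁻ x, f x ∂ν) / (4 * β * ω) ≤ N by
    have := (ENNReal.div_le_iff_le_mul (Or.inl hC0) (Or.inl hCt)).mp hsuf
    rwa [mul_comm] at this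
  refine le_sInf fun l hl => ?_
  obtain ⟨hl0, hint⟩ := hl
  rcases eq_or_ne l ⊤ with rfl | hlt
  · exact le_top
  have h2 : ∫⁻ x, A.toFun (f x / l) ∂ν ≤ 1 := le_trans (lintegral_mono' hν le_rfl) hint
  have h1 : (∫⁻ x, f x ∂ν) / l ≤ 4 * β * ω := by
    have hdiv : ∫⁻ x, f x / l ∂ν = (∫⁻ x, f x ∂ν) / l := by
      simp_rw [div_eq_mul_inv]
      exact lintegral_mul_const' _ _ (ENNReal.inv_ne_top.mpr hl0.ne')
    rw [← hdiv]
    calc ∫⁻ x, f x / l ∂ν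
        ≤ ∫⁻ x, (2 * β + 2 * β * ω * A.toFun (f x / l)) ∂ν :=
          lintegral_mono fun x => ptwise A hβ0 hβt hω0 hωt hA2β _
      _ = 2 * β * ν Set.univ + 2 * β * ω * ∫⁻ x, A.toFun (f x / l) ∂ν := by
          rw [lintegral_add_left measurable_const, lintegral_const,
            lintegral_const_mul' _ _ h2βωt]
      _ ≤ 2 * β * ω + 2 * β * ω * 1 :=
          add_le_add (mul_le_mul_right hνuniv _) (mul_le_mul_right h2 _)
      _ = 4 * β * ω := by rw [mul_one]; ring
  have h3 : ∫⁻ x, f x ∂ν ≤ 4 * β * ω * l :=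
    (ENNReal.div_le_iff_le_mul (Or.inl hl0.ne') (Or.inl hlt)).mp h1
  exact (ENNReal.div_le_iff_le_mul (Or.inl hC0) (Or.inl hCt)).mpr (by rwa [mul_comm] at h3)

end YFAux

/-- Decomposition norm bound: with
`f = χ_{Ω_i}·(g − (χ_{Ω_i∩G_i}/|Ω_i∩G_i|)·∫_{Ω_i} g)`,
one has `‖f‖_{L^A(Ω)} ≤ (1 + 4|Ω_i|/|Ω_i∩G_i|)·‖g‖_{L^A(Ω)}`. -/
theorem decomposition_norm_bound (n : ℕ) (A : YoungFunction)
    (Ω Ωi Gi : Set (Fin n → ℝ)) (hΩ : MeasurableSet Ω) (hΩi : MeasurableSet Ωi)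
    (hGi : MeasurableSet Gi) (hΩ0 : 0 < volume Ω) (hΩfin : volume Ω < ∞)
    (hΩiΩ : Ωi ⊆ Ω) (hGiΩ : Gi ⊆ Ω) (hmeas : 0 < volume (Ωi ∩ Gi))
    (g : (Fin n → ℝ) → ℝ)
    (hg : luxNorm A.toFun (volume.restrict Ω) (fun x => ENNReal.ofReal |g x|) ≠ ∞) :
    luxNorm A.toFun (volume.restrict Ω)
        (fun x => ENNReal.ofReal |Set.indicator Ωi (fun y => g y -
          Set.indicator (Ωi ∩ Gi) (fun _ => (1 : ℝ)) y / (volume (Ωi ∩ Gi)).toReal *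
            ∫ z in Ωi, g z) x|) ≤
      ENNReal.ofReal (1 + 4 * (volume Ωi).toReal / (volume (Ωi ∩ Gi)).toReal) *
        luxNorm A.toFun (volume.restrict Ω) (fun x => ENNReal.ofReal |g x|) := by
  classical
  set E := Ωi ∩ Gi with hEdef
  have hE : MeasurableSet E := hΩi.inter hGi
  set μ := volume.restrict Ω with hμdef
  set ν := volume.restrict Ωi with hνdef
  set e := volume E with hedef
  set ω := volume Ωi with hωdef
  have hEΩi : E ⊆ Ωi := Set.inter_subset_left
  have heω : e ≤ ω := measure_mono hEΩi
  have hωΩ : ω ≤ volume Ω := measure_mono hΩiΩ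
  have hωt : ω ≠ ⊤ := (lt_of_le_of_lt hωΩ hΩfin).ne
  have het : e ≠ ⊤ := (lt_of_le_of_lt (heω.trans hωΩ) hΩfin).ne
  have he0 : e ≠ 0 := hmeas.ne'
  have hω0 : ω ≠ 0 := fun h => he0 (le_antisymm (h ▸ heω) zero_le)
  set β := genInv A.toFun (1 / ω) with hβdef
  have hr0 : (1 : ℝ≥0∞) / ω ≠ 0 := by simp [one_div, hωt]
  have hrt : (1 : ℝ≥0∞) / ω ≠ ⊤ := by simp [one_div, hω0]
  have hβ0 : β ≠ 0 := (YFAux.genInv_pos A hr0).ne'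
  have hβt : β ≠ ⊤ := (YFAux.genInv_lt_top A hrt).ne
  have hβlt : β < 2 * β := by
    rw [two_mul]
    exact ENNReal.lt_add_right hβt hβ0
  have hA2β : 1 / ω ≤ A.toFun (2 * β) := (YFAux.lt_of_genInv_lt A hβlt).le
  set N := luxNorm A.toFun μ (fun x => ENNReal.ofReal |g x|) with hNdef
  have hNt : N ≠ ⊤ := hg
  have hνle : ν ≤ μ := Measure.restrict_mono hΩiΩ le_rfl
  have hνuniv : ν Set.univ ≤ ω := by
    rw [hνdef, Measure.restrict_apply_univ]
  have hIbound : ∫⁻ x, ENNReal.ofReal |g x| ∂ν ≤ 4 * β * ω * N :=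
    YFAux.lintegral_le_luxNorm A hνle hβ0 hβt hω0 hωt hA2β hνuniv _
  have hCfin : 4 * β * ω * N ≠ ⊤ :=
    ENNReal.mul_ne_top (ENNReal.mul_ne_top (ENNReal.mul_ne_top (by simp) hβt) hωt) hNt
  have hlintt : ∫⁻ x, ENNReal.ofReal |g x| ∂ν ≠ ⊤ := ne_top_of_le_ne_top hCfin hIbound
  set I := ∫ z in Ωi, g z with hIdef
  have hInorm : ENNReal.ofReal |I| ≤ ∫⁻ x, ENNReal.ofReal |g x| ∂ν := by
    have h := norm_integral_le_lintegral_norm (μ := ν) g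
    simp only [Real.norm_eq_abs] at h
    calc ENNReal.ofReal |I|
        ≤ ENNReal.ofReal ((∫⁻ x, ENNReal.ofReal |g x| ∂ν).toReal) :=
          ENNReal.ofReal_le_ofReal h
      _ = ∫⁻ x, ENNReal.ofReal |g x| ∂ν := ENNReal.ofReal_toReal hlintt
  set eR := e.toReal with heRdef
  have heR : 0 < eR := ENNReal.toReal_pos he0 het
  set c := ENNReal.ofReal (|I| / eR) with hcdef
  have hc : c = ENNReal.ofReal |I| / e := by
    rw [hcdef, ENNReal.ofReal_div_of_pos heR, heRdef, ENNReal.ofReal_toReal het]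
  have hpt : ∀ x, ENNReal.ofReal |Set.indicator Ωi (fun y => g y -
      Set.indicator E (fun _ => (1 : ℝ)) y / eR * I) x| ≤
      ENNReal.ofReal |g x| + E.indicator (fun _ => c) x := by
    intro x
    by_cases hx : x ∈ Ωi
    · rw [Set.indicator_of_mem hx]
      have hind : |Set.indicator E (fun _ => (1 : ℝ)) x / eR * I| =
          Set.indicator E (fun _ => |I| / eR) x := by
        by_cases hxE : x ∈ E
        · simp [hxE, abs_mul, abs_inv, abs_of_pos heR, div_eq_mul_inv, mul_comm]
        · simp [hxE]
      have habs : |g x - Set.indicator E (fun _ => (1 : ℝ)) x / eR * I| ≤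
          |g x| + Set.indicator E (fun _ => |I| / eR) x := by
        refine le_trans (abs_sub _ _) ?_
        rw [hind]
      calc ENNReal.ofReal |g x - Set.indicator E (fun _ => (1 : ℝ)) x / eR * I|
          ≤ ENNReal.ofReal (|g x| + Set.indicator E (fun _ => |I| / eR) x) :=
            ENNReal.ofReal_le_ofReal habs
        _ ≤ ENNReal.ofReal |g x| +
              ENNReal.ofReal (Set.indicator E (fun _ => |I| / eR) x) :=
            ENNReal.ofReal_add_le
        _ = ENNReal.ofReal |g x| + E.indicator (fun _ => c) x := by
            congr 1
            by_cases hxE : x ∈ E <;> simp [hxE, hcdef]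
    · rw [Set.indicator_of_notMem hx]
      simpa using zero_le
  have hμE : μ E = e := by
    rw [hμdef, Measure.restrict_apply hE,
      Set.inter_eq_self_of_subset_left (hEΩi.trans hΩiΩ)]
  have hindle : luxNorm A.toFun μ (E.indicator fun _ => c) ≤ c / β :=
    YFAux.luxNorm_indicator_le A μ hE hβ0 hβt
      (fun s hs => YFAux.le_of_lt_genInv A hs) (hμE ▸ heω)
  have hcβ : c / β ≤ 4 * ω * N / e := by
    have hcle : c ≤ β * (4 * ω * N / e) := by
      rw [hc]
      calc ENNReal.ofReal |I| / e ≤ (4 * β * ω * N) / e :=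
            ENNReal.div_le_div_right (le_trans hInorm hIbound) e
        _ = β * (4 * ω * N) / e := by ring_nf
        _ = β * (4 * ω * N / e) := by rw [mul_div_assoc]
    calc c / β ≤ (β * (4 * ω * N / e)) / β := ENNReal.div_le_div_right hcle β
      _ = (4 * ω * N / e) * (β / β) := by rw [mul_comm, mul_div_assoc]
      _ = 4 * ω * N / e := by rw [ENNReal.div_self hβ0 hβt, mul_one]
  have hconst : ENNReal.ofReal (1 + 4 * ω.toReal / eR) = 1 + 4 * ω / e := by
    rw [ENNReal.ofReal_add zero_le_one (by positivity), ENNReal.ofReal_one,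
      ENNReal.ofReal_div_of_pos heR, heRdef, ENNReal.ofReal_toReal het]
    congr 2
    rw [ENNReal.ofReal_mul (by norm_num), ENNReal.ofReal_ofNat, ENNReal.ofReal_toReal hωt]
  calc luxNorm A.toFun μ (fun x => ENNReal.ofReal |Set.indicator Ωi (fun y => g y -
        Set.indicator E (fun _ => (1 : ℝ)) y / eR * I) x|)
      ≤ luxNorm A.toFun μ (fun x => ENNReal.ofReal |g x| + E.indicator (fun _ => c) x) :=
        YFAux.luxNorm_mono A μ hpt
    _ ≤ N + luxNorm A.toFun μ (E.indicator fun _ => c) :=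
        YFAux.luxNorm_add_le A μ (measurable_const.indicator hE)
    _ ≤ N + 4 * ω * N / e := add_le_add_right (le_trans hindle hcβ) N
    _ = ENNReal.ofReal (1 + 4 * ω.toReal / eR) * N := by
        rw [hconst, add_mul, one_mul]
        congr 1
        rw [div_eq_mul_inv, div_eq_mul_inv]
        ring
end
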